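/- arXiv:2203.09490 — 5 statements merged into one kernel-verified Lean document; each statement's English description precedes it below -/
import Mathlib

section
/- Let (A_j)_{j∈J} be a family of commutative rings and let R = ∏_{j∈J} A_j be their product. Let M be a finitely presented R-module. Then for each j ∈ J the base change A_j ⊗_R M of M along the projection R → A_j is a finitely presented A_j-module, and the canonical R-linear map M → ∏_{j∈J} (A_j ⊗_R M), sending m to the family (1 ⊗ m)_{j∈J}, is bijective. -/
/-!
Both `M ↦ M` and `M ↦ ∏ j, A j ⊗ M` are right exact: tensoring is, and products of exact
sequences are exact. On a finite free module `(∀ j, A j)ⁿ` the canonical map becomes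
`(∀ j, A j)ⁿ → ∀ j, (A j)ⁿ`, which only swaps the two indices. The five lemma applied to a
finite presentation `Rᵐ → Rⁿ → M → 0` therefore shows that it is bijective for every
finitely presented `M`.
-/

open scoped TensorProduct

/-- Each factor `A j` of a product ring is an algebra over the product via the projection. -/
noncomputable instance piEvalAlgebra {J : Type*} {A : J → Type*} [∀ j, CommRing (A j)]
    {j : J} : Algebra (∀ j', A j') (A j) :=
  (Pi.evalRingHom A j).toAlgebra

theorem Function.Exact.piMap {ι : Type*} {X Y Z : ι → Type*} [∀ i, Zero (Z i)]
    {f : ∀ i, X i → Y i} {g : ∀ i, Y i → Z i} (h : ∀ i, Function.Exact (f i) (g i)) :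
    Function.Exact (Pi.map f) (Pi.map g) := by
  intro y
  rw [Set.range_piMap, funext_iff]
  simp [h _ _]

open TensorProduct LinearMap

section

variable {J : Type*} (A : J → Type*) [∀ j, CommRing (A j)]

/- Stated additively: `∀ j, A j ⊗ M` carries two `∀ j, A j`-module structures (`Pi.module` and
the componentwise `Pi.module'`), which instance search does not identify. -/
noncomputable def toPiBaseChange (M : Type*) [AddCommGroup M] [Module (∀ j, A j) M] :
    M →+ ∀ j, A j ⊗[∀ j', A j'] M :=
  .pi fun j ↦ (mk _ (A j) M 1).toAddMonoidHom

noncomputable def piLTensor {M N : Type*} [AddCommGroup M] [Module (∀ j, A j) M]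
    [AddCommGroup N] [Module (∀ j, A j) N] (f : M →ₗ[∀ j, A j] N) :
    (∀ j, A j ⊗[∀ j', A j'] M) →+ ∀ j, A j ⊗[∀ j', A j'] N :=
  .piMap fun j ↦ (f.lTensor (A j)).toAddMonoidHom

theorem piLTensor_comp_toPiBaseChange {M N : Type*} [AddCommGroup M] [Module (∀ j, A j) M]
    [AddCommGroup N] [Module (∀ j, A j) N] (f : M →ₗ[∀ j, A j] N) :
    (piLTensor A f).comp (toPiBaseChange A M) = (toPiBaseChange A N).comp f.toAddMonoidHom := by
  ext m j
  simp [piLTensor, toPiBaseChange]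

theorem toPiBaseChange_bijective_of_free (ι : Type*) [Fintype ι] [DecidableEq ι] :
    Function.Bijective (toPiBaseChange A (ι → ∀ j, A j)) := by
  have h : Pi.map (fun j ↦ piScalarRight (∀ j', A j') (A j) (A j) ι) ∘ toPiBaseChange A _ =
      Function.swap := by
    ext x j i
    simp [toPiBaseChange, Algebra.smul_def, RingHom.algebraMap_toAlgebra]
  refine (Function.Bijective.of_comp_iff'
    (.piMap fun j ↦ (piScalarRight (∀ j', A j') (A j) (A j) ι).bijective) _).mp ?_
  rw [h]
  exact Function.swap_bijective

theorem toPiBaseChange_bijective (M : Type*) [AddCommGroup M] [Module (∀ j, A j) M]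
    [Module.FinitePresentation (∀ j, A j) M] : Function.Bijective (toPiBaseChange A M) := by
  obtain ⟨n, m, f, g, hf, hgf⟩ := Module.FinitePresentation.exists_fin' (∀ j, A j) M
  exact AddMonoidHom.bijective_of_surjective_of_bijective_of_right_exact
    g.toAddMonoidHom f.toAddMonoidHom (piLTensor A g) (piLTensor A f)
    (toPiBaseChange A _) (toPiBaseChange A _) (toPiBaseChange A M)
    (piLTensor_comp_toPiBaseChange A g) (piLTensor_comp_toPiBaseChange A f) hgf
    (Function.Exact.piMap fun j ↦ lTensor_exact (A j) hgf hf)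
    (toPiBaseChange_bijective_of_free A _).2 (toPiBaseChange_bijective_of_free A _) hf
    (Function.Surjective.piMap fun j ↦ lTensor_surjective (A j) hf)

end

/-- A finitely presented module over a product of commutative rings: each base change
`A j ⊗_R M` along the projection `R = ∏ A j → A j` is finitely presented over `A j`,
and the canonical map `M → ∏ (A j ⊗_R M)`, `m ↦ (1 ⊗ m)_j`, is bijective. -/
theorem finitePresentation_over_product
    {J : Type*} (A : J → Type*) [∀ j, CommRing (A j)]
    (M : Type*) [AddCommGroup M] [Module (∀ j, A j) M]
    [Module.FinitePresentation (∀ j, A j) M] :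
    (∀ j, Module.FinitePresentation (A j) ((A j) ⊗[∀ j', A j'] M)) ∧
      Function.Bijective
        (fun (m : M) (j : J) => ((1 : A j) ⊗ₜ[∀ j', A j'] m : (A j) ⊗[∀ j', A j'] M)) :=
  ⟨fun _ ↦ inferInstance, toPiBaseChange_bijective A M⟩
end

section
/- Let (V_j)_{j∈J} be a family of valuation rings and set R = ∏_{j∈J} V_j. Then every finitely generated ideal I of R is finitely presented as an R-module. (In other words, the product of any family of valuation rings is a coherent ring.) -/
/-- A product of valuation rings is coherent: every finitely generated ideal of the
product ring is finitely presented as a module. -/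
theorem product_of_valuationRings_coherent
    {J : Type*} (V : J → Type*) [∀ j, CommRing (V j)] [∀ j, IsDomain (V j)]
    [∀ j, ValuationRing (V j)]
    (I : Ideal (∀ j, V j)) (hI : I.FG) :
    Module.FinitePresentation (∀ j, V j) I := by
  classical
  obtain ⟨s, hs⟩ := hI
  -- membership in the span of a finite set is componentwise
  have key : ∀ x : ∀ j, V j, x ∈ Ideal.span ((s : Set (∀ j, V j))) ↔
      ∀ j, x j ∈ Ideal.span (Set.range fun a : s => a.1 j) := by
    intro x
    constructor
    · intro hx j
      have hsub : (s : Set (∀ j, V j)) ⊆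
          ↑((Ideal.span (Set.range fun a : s => a.1 j)).comap (Pi.evalRingHom V j)) := by
        intro a ha
        simp only [SetLike.mem_coe, Ideal.mem_comap, Pi.evalRingHom_apply]
        exact Ideal.subset_span ⟨⟨a, ha⟩, rfl⟩
      exact (Ideal.span_le.mpr hsub) hx
    · intro hx
      choose c hc using fun j => (Submodule.mem_span_range_iff_exists_fun (V j)).mp (hx j)
      have hmem : x ∈ Submodule.span (∀ j, V j) (Set.range fun a : s => a.1) := by
        refine (Submodule.mem_span_range_iff_exists_fun _).mpr ⟨fun a j => c j a, ?_⟩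
        funext j
        simpa [Finset.sum_apply] using hc j
      have hrange : (Set.range fun a : s => a.1) = (s : Set (∀ j, V j)) :=
        Subtype.range_coe
      rwa [hrange] at hmem
  -- pick a pointwise generator
  have bpick : ∀ j, ∃ m : V j,
      Ideal.span (Set.range fun a : s => a.1 j) = Ideal.span {m} := by
    intro j
    have hfg : (Ideal.span (Set.range fun a : s => a.1 j)).FG :=
      Submodule.fg_span (Set.finite_range _)
    obtain ⟨m, hm⟩ := IsBezout.isPrincipal_of_FG _ hfg
    exact ⟨m, by simpa using hm⟩
  choose b hb using bpick
  have hbI : b ∈ I := by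
    rw [← hs, key]
    intro j
    rw [hb j]
    exact Ideal.subset_span rfl
  have hIb : I = Ideal.span {b} := by
    apply le_antisymm
    · rw [← hs, Ideal.span_le]
      intro a ha
      have hdvd : ∀ j, b j ∣ a j := by
        intro j
        have : a j ∈ Ideal.span ({b j} : Set (V j)) := by
          rw [← hb j]
          exact Ideal.subset_span ⟨⟨a, ha⟩, rfl⟩
        exact (Ideal.mem_span_singleton).mp this
      choose q hq using hdvd
      refine (Ideal.mem_span_singleton).mpr ⟨q, ?_⟩
      funext j
      exact hq j
    · rw [Ideal.span_le, Set.singleton_subset_iff]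
      exact hbI
  -- the linear map R → I, r ↦ r • b
  set l := LinearMap.toSpanSingleton (∀ j, V j) I ⟨b, hbI⟩ with hl
  have hsurj : Function.Surjective l := by
    rintro ⟨x, hx⟩
    rw [hIb] at hx
    obtain ⟨r, hr⟩ := (Ideal.mem_span_singleton).mp hx
    refine ⟨r, ?_⟩
    apply Subtype.ext
    show r • b = x
    rw [hr, smul_eq_mul, mul_comm]
  set e : ∀ j, V j := fun j => if b j = 0 then 1 else 0 with he
  have hker : LinearMap.ker l = Submodule.span (∀ j, V j) {e} := by
    ext r
    have h1 : r ∈ LinearMap.ker l ↔ r * b = 0 := by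
      rw [LinearMap.mem_ker]
      constructor
      · intro h
        have := congrArg Subtype.val h
        simpa [l, LinearMap.toSpanSingleton_apply, smul_eq_mul] using this
      · intro h
        apply Subtype.ext
        simpa [l, LinearMap.toSpanSingleton_apply, smul_eq_mul] using h
    rw [h1, Submodule.mem_span_singleton]
    constructor
    · intro h
      refine ⟨r, ?_⟩
      funext j
      have hj : r j * b j = 0 := congrFun h j
      by_cases hbj : b j = 0
      · simp [he, hbj]
      · rcases mul_eq_zero.mp hj with h0 | h0
        · simp [he, hbj, h0]
        · exact absurd h0 hbj
    · rintro ⟨c, rfl⟩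
      funext j
      by_cases hbj : b j = 0
      · simp [hbj]
      · simp [he, hbj]
  have hfgker : (LinearMap.ker l).FG := by
    rw [hker]
    exact Submodule.fg_span_singleton e
  exact Module.finitePresentation_of_surjective l hsurj hfgker
end

section
/- Let p be a prime and ℤ_p the ring of p-adic integers. Let (A_j)_{j∈J} be a family of commutative ℤ_p-algebras such that for every j ∈ J: A_j is a nontrivial ring, p is a nonzerodivisor on A_j (i.e. A_j is p-torsion-free), and p is not a unit in A_j. Then the product ring ∏_{j∈J} A_j is faithfully flat as a module over ∏_{j∈J} ℤ_p, via the product of the structure homomorphisms. -/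
/-!
`ℤ_p` is a discrete valuation ring with uniformizer `p`, so a `p`-torsion-free `A_j` is
torsion-free, hence flat, and it is faithfully flat because `p A_j ≠ A_j`. A product of
valuation rings is Bézout, so flatness of `∏ A_j` can be tested on principal ideals, where it
reduces to torsion-freeness in each coordinate. If `I • ∏ A_j = ∏ A_j`, write an element
whose coordinates avoid every `p A_j` as `b • y` with `b ∈ I`; then every `b_j` is a unit,
so `I = ⊤`.
-/

open TensorProduct IsLocalRing Pointwise

section Bezout

variable {R M : Type*} [CommRing R] [AddCommGroup M] [Module R M]

theorem IsBezout.exists_smul_eq_of_mem_smul_top [IsBezout R] {I : Ideal R} {x : M}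
    (hx : x ∈ I • (⊤ : Submodule R M)) : ∃ b ∈ I, ∃ y : M, b • y = x := by
  refine Submodule.smul_induction_on hx (fun r hr n _ => ⟨r, hr, n, rfl⟩) ?_
  rintro _ _ hx hy
  obtain ⟨b, hb, y, rfl⟩ := hx
  obtain ⟨c, hc, z, rfl⟩ := hy
  obtain ⟨β, hβ⟩ := IsBezout.gcd_dvd_left b c
  obtain ⟨γ, hγ⟩ := IsBezout.gcd_dvd_right b c
  have hspan : Ideal.span {b, c} ≤ I := by
    rw [Ideal.span_le, Set.insert_subset_iff, Set.singleton_subset_iff]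
    exact ⟨hb, hc⟩
  refine ⟨IsBezout.gcd b c, hspan ?_, β • y + γ • z, ?_⟩
  · rw [← IsBezout.span_gcd]
    exact Ideal.mem_span_singleton_self _
  · rw [smul_add, smul_smul, smul_smul, ← hβ, ← hγ]

theorem Ideal.surjective_span_singleton_tmul (e : R) :
    Function.Surjective fun m : M =>
      (⟨e, Ideal.mem_span_singleton_self e⟩ : Ideal.span {e}) ⊗ₜ[R] m := by
  intro t
  induction t using TensorProduct.induction_on with
  | zero => exact ⟨0, tmul_zero _ _⟩
  | tmul x n =>
    obtain ⟨r, hr⟩ := Ideal.mem_span_singleton'.mp x.2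
    refine ⟨r • n, ?_⟩
    simp only [← smul_tmul]
    congr 1
    exact Subtype.ext (by simp [hr])
  | add u v hu hv =>
    obtain ⟨m, rfl⟩ := hu
    obtain ⟨n, rfl⟩ := hv
    exact ⟨m + n, tmul_add _ _ _⟩

/-- Over a Bézout ring flatness only has to be tested on principal ideals `(r)`, and there
`r ⊗ m = r ⊗ s • m = s r ⊗ m = 0`. -/
theorem Module.Flat.of_isBezout [IsBezout R]
    (h : ∀ (r : R) (m : M), r • m = 0 → ∃ s : R, s * r = 0 ∧ s • m = m) :
    Module.Flat R M := by
  refine Module.Flat.iff_lift_lsmul_comp_subtype_injective.mpr fun I hI => ?_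
  obtain ⟨e, rfl⟩ := (IsBezout.isPrincipal_of_FG I hI).principal
  refine (injective_iff_map_eq_zero _).mpr fun t ht => ?_
  obtain ⟨m, rfl⟩ := Ideal.surjective_span_singleton_tmul (M := M) e t
  obtain ⟨s, hse, hsm⟩ := h e m (by simpa using ht)
  have hse' : s • (⟨e, Ideal.mem_span_singleton_self e⟩ : Ideal.span {e}) = 0 :=
    Subtype.ext hse
  show _ ⊗ₜ[R] m = 0
  rw [← hsm, ← smul_tmul, hse', zero_tmul]

end Bezout

instance Pi.isBezout {ι : Type*} {R : ι → Type*} [∀ i, CommRing (R i)]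
    [∀ i, IsBezout (R i)] : IsBezout (∀ i, R i) := by
  refine IsBezout.iff_span_pair_isPrincipal.mpr fun a b =>
    ⟨fun i => IsBezout.gcd (a i) (b i), ?_⟩
  choose x y hxy using fun i => IsBezout.gcd_eq_sum (a i) (b i)
  choose α hα using fun i => IsBezout.gcd_dvd_left (a i) (b i)
  choose β hβ using fun i => IsBezout.gcd_dvd_right (a i) (b i)
  refine le_antisymm ?_ ?_
  · rw [Ideal.span_le, Set.insert_subset_iff, Set.singleton_subset_iff]
    exact ⟨Ideal.mem_span_singleton.mpr ⟨α, funext hα⟩,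
      Ideal.mem_span_singleton.mpr ⟨β, funext hβ⟩⟩
  · rw [Submodule.span_singleton_le_iff_mem, Ideal.mem_span_pair]
    exact ⟨x, y, funext hxy⟩

section Pi

variable {ι : Type*} {R M : ι → Type*} [∀ i, CommRing (R i)] [∀ i, IsDomain (R i)]
  [∀ i, AddCommGroup (M i)] [∀ i, Module (R i) (M i)]

/-- The witness for `r • m = 0` is the indicator of the coordinates where `r` vanishes. -/
theorem Module.Flat.pi_of_isTorsionFree [∀ i, IsBezout (R i)]
    [∀ i, Module.IsTorsionFree (R i) (M i)] :
    Module.Flat (∀ i, R i) (∀ i, M i) := by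
  classical
  refine Module.Flat.of_isBezout fun r m hrm =>
    ⟨fun i => if r i = 0 then 1 else 0, funext fun i => ?_, funext fun i => ?_⟩
  · by_cases h : r i = 0 <;> simp [h]
  · have hi : r i • m i = 0 := congrFun hrm i
    by_cases h : r i = 0
    · simp [h]
    · simp [h, (smul_eq_zero.mp hi).resolve_left h]

theorem Module.FaithfullyFlat.pi [∀ i, ValuationRing (R i)]
    [∀ i, Module.FaithfullyFlat (R i) (M i)] :
    Module.FaithfullyFlat (∀ i, R i) (∀ i, M i) := by
  refine (Module.FaithfullyFlat.iff_flat_and_ideal_smul_eq_top _ _).mpr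
    ⟨Module.Flat.pi_of_isTorsionFree, fun I hI => ?_⟩
  choose x hx using fun i =>
    SetLike.exists_not_mem_of_ne_top (maximalIdeal (R i) • (⊤ : Submodule (R i) (M i)))
      (Module.FaithfullyFlat.submodule_ne_top (maximalIdeal.isMaximal _)) rfl
  obtain ⟨b, hbI, y, hby⟩ :=
    IsBezout.exists_smul_eq_of_mem_smul_top (by rw [hI]; exact Submodule.mem_top : x ∈ I • ⊤)
  refine I.eq_top_of_isUnit_mem hbI (Pi.isUnit_iff.mpr fun i => ?_)
  by_contra hb
  refine hx i (congrFun hby i ▸ Submodule.smul_mem_smul ?_ Submodule.mem_top)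
  exact (mem_maximalIdeal _).mpr hb

end Pi

theorem Module.FaithfullyFlat.of_maximalIdeal_smul_top_ne_top {R M : Type*} [CommRing R]
    [IsLocalRing R] [AddCommGroup M] [Module R M] [Module.Flat R M]
    (h : maximalIdeal R • (⊤ : Submodule R M) ≠ ⊤) : Module.FaithfullyFlat R M :=
  ⟨fun _ hm => eq_maximalIdeal hm ▸ h⟩

namespace IsDiscreteValuationRing

variable {R : Type*} [CommRing R] [IsDomain R] [IsDiscreteValuationRing R] {ϖ : R}

theorem isTorsionFree_of_isSMulRegular {M : Type*} [AddCommGroup M] [Module R M]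
    (hϖ : Irreducible ϖ) (hM : IsSMulRegular M ϖ) : Module.IsTorsionFree R M := by
  refine ⟨fun x hx => ?_⟩
  obtain ⟨n, u, rfl⟩ := eq_unit_mul_pow_irreducible (isRegular_iff_ne_zero.mp hx) hϖ
  exact (u.isUnit.isSMulRegular M).mul (hM.pow n)

theorem faithfullyFlat_of_isSMulRegular {A : Type*} [CommRing A] [Algebra R A]
    (hϖ : Irreducible ϖ) (hA : IsSMulRegular A ϖ) (hnu : ¬IsUnit (algebraMap R A ϖ)) :
    Module.FaithfullyFlat R A := by
  have : Module.Flat R A := Module.Flat.flat_iff_torsion_eq_bot_of_isBezout.mpr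
    (Submodule.isTorsionFree_iff_torsion_eq_bot.mp (isTorsionFree_of_isSMulRegular hϖ hA))
  refine .of_maximalIdeal_smul_top_ne_top fun h => hnu ?_
  rw [(irreducible_iff_uniformizer ϖ).mp hϖ, Submodule.ideal_span_singleton_smul] at h
  have hone : (1 : A) ∈ ϖ • (⊤ : Submodule R A) := by
    rw [h]
    exact Submodule.mem_top
  obtain ⟨y, -, hy⟩ := (Submodule.mem_smul_pointwise_iff_exists _ _ _).mp hone
  exact .of_mul_eq_one y (by rwa [Algebra.smul_def] at hy)

end IsDiscreteValuationRing

theorem product_faithfullyFlat_over_product_padicInt_general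
    (p : ℕ) [Fact p.Prime] {J : Type*} (A : J → Type*)
    [∀ j, CommRing (A j)] [∀ j, Algebra ℤ_[p] (A j)]
    (htf : ∀ j, ∀ x : A j, (p : A j) * x = 0 → x = 0)
    (hnu : ∀ j, ¬IsUnit (p : A j)) :
    @Module.FaithfullyFlat (∀ _ : J, ℤ_[p]) (∀ j, A j) _ _
      (Module.compHom _
        (Pi.ringHom fun j =>
          (algebraMap ℤ_[p] (A j)).comp (Pi.evalRingHom (fun _ : J => ℤ_[p]) j))) := by
  have hmodule : (Module.compHom (∀ j, A j)
      (Pi.ringHom fun j =>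
        (algebraMap ℤ_[p] (A j)).comp (Pi.evalRingHom (fun _ : J => ℤ_[p]) j)) :
      Module (∀ _ : J, ℤ_[p]) (∀ j, A j)) = Pi.module' :=
    Module.ext' _ _ fun r x => funext fun j => (Algebra.smul_def (r j) (x j)).symm
  have hA : ∀ j, Module.FaithfullyFlat ℤ_[p] (A j) := fun j =>
    IsDiscreteValuationRing.faithfullyFlat_of_isSMulRegular PadicInt.irreducible_p
      (isSMulRegular_iff_right_eq_zero_of_smul.mpr fun x hx =>
        htf j x (by rwa [Algebra.smul_def, map_natCast] at hx))
      (by rw [map_natCast]; exact hnu j)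
  rw [hmodule]
  exact Module.FaithfullyFlat.pi

/-- Let `(A j)` be a family of commutative `ℤ_p`-algebras which are nontrivial,
`p`-torsion-free, and in which `p` is not a unit.  Then `∏ A j` is faithfully flat over
`∏ ℤ_p` via the product of the structure homomorphisms. -/
theorem product_faithfullyFlat_over_product_padicInt
    (p : ℕ) [Fact p.Prime] {J : Type*} (A : J → Type*)
    [∀ j, CommRing (A j)] [∀ j, Algebra ℤ_[p] (A j)]
    [∀ j, Nontrivial (A j)]
    (htf : ∀ j, ∀ x : A j, (p : A j) * x = 0 → x = 0)
    (hnu : ∀ j, ¬IsUnit (p : A j)) :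
    @Module.FaithfullyFlat (∀ _ : J, ℤ_[p]) (∀ j, A j) _ _
      (Module.compHom _
        (Pi.ringHom fun j =>
          (algebraMap ℤ_[p] (A j)).comp (Pi.evalRingHom (fun _ : J => ℤ_[p]) j))) :=
  product_faithfullyFlat_over_product_padicInt_general p A htf hnu
end

section
/- Let p be a prime and let (R_j)_{j∈J} be a family of integral domains of characteristic p such that each R_j is perfect (the Frobenius x ↦ x^p is bijective), integrally closed in its fraction field, and has algebraically closed fraction field. Let 𝕎(R_j) denote the ring of p-typical Witt vectors of R_j with Witt vector Frobenius F. Then the additive endomorphism F − id of ∏_{j∈J} 𝕎(R_j) (acting componentwise) is surjective, and its kernel equals the image of the canonical ring homomorphism ∏_{j∈J} ℤ_p → ∏_{j∈J} 𝕎(R_j), given in each component by the identification ℤ_p ≅ 𝕎(𝔽_p) followed by the map 𝕎(𝔽_p) → 𝕎(R_j) induced by the embedding 𝔽_p → R_j. -/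
/-!
In characteristic `p` the Witt vector Frobenius raises every Witt coordinate to the `p`-th power,
so `F x = x` says that every coordinate of `x` is a root of `X ^ p - X`; in a domain these
are exactly the elements of `𝔽_p`, which identifies the kernel of `F - id` with `𝕎(𝔽_p) = ℤ_p`.

Surjectivity is successive approximation along the Verschiebung filtration. If the error
`F x - x - b` lies in `V^n 𝕎(R)` with leading coordinate `z₀`, replacing `x` by `x + V^n [a]`
with `a ^ p - a = -z₀` pushes the error into `V^(n+1) 𝕎(R)` without changing the first `n`
coordinates of `x`, and the approximations converge coordinatewise. The Artin–Schreier equation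
`a ^ p - a = c` is solvable because its root in the algebraically closed fraction field is
integral over `R`, hence lies in `R`.
-/

open Polynomial WittVector

section IntegrallyClosed

variable {R : Type*} [CommRing R] [IsDomain R] [IsIntegrallyClosed R]
  [IsAlgClosed (FractionRing R)]

theorem IsIntegrallyClosed.exists_isRoot_of_monic {f : R[X]} (hf : f.Monic)
    (hdeg : f.natDegree ≠ 0) : ∃ a, f.IsRoot a := by
  obtain ⟨t, ht⟩ := IsAlgClosed.exists_root (f.map (algebraMap R (FractionRing R)))
    (by rw [degree_eq_natDegree (hf.map _).ne_zero, hf.natDegree_map]; exact_mod_cast hdeg)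
  rw [IsRoot, eval_map_algebraMap] at ht
  obtain ⟨a, rfl⟩ := IsIntegrallyClosed.isIntegral_iff.mp ⟨f, hf, ht⟩
  refine ⟨a, IsFractionRing.injective R (FractionRing R) ?_⟩
  rwa [aeval_algebraMap_apply, ← map_zero (algebraMap R _), coe_aeval_eq_eval] at ht

theorem IsIntegrallyClosed.exists_pow_sub_self_eq {n : ℕ} (hn : 1 < n) (c : R) :
    ∃ a : R, a ^ n - a = c := by
  have hlt : (X + C c).degree < (n : WithBot ℕ) :=
    (degree_X_add_C c).trans_lt (by exact_mod_cast hn)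
  have hdeg : (X ^ n - (X + C c)).degree = (n : WithBot ℕ) := by
    rw [degree_sub_eq_left_of_degree_lt (by rwa [degree_X_pow]), degree_X_pow]
  obtain ⟨a, ha⟩ := IsIntegrallyClosed.exists_isRoot_of_monic (monic_X_pow_sub hlt)
    (by rw [natDegree_eq_of_degree_eq_some hdeg]; omega)
  refine ⟨a, ?_⟩
  simp only [IsRoot, eval_sub, eval_pow, eval_add, eval_X, eval_C] at ha
  linear_combination ha

end IntegrallyClosed

variable {p : ℕ} [Fact p.Prime]

theorem ZMod.mem_range_castHom_iff_pow_eq_self {R : Type*} [CommRing R] [IsDomain R] [CharP R p]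
    {c : R} :
    c ∈ Set.range (ZMod.castHom (dvd_refl p) R) ↔ c ^ p = c := by
  refine ⟨?_, fun hc => ?_⟩
  · rintro ⟨d, rfl⟩
    rw [← map_pow, ZMod.pow_card]
  · let K := FractionRing R
    have hbot : algebraMap R K c ∈ (⊥ : Subfield K) :=
      (Subfield.mem_bot_iff_pow_eq_self K p).2 (by rw [← map_pow, hc])
    obtain ⟨m, hm⟩ := (mem_bot_iff_intCast p K).1 hbot
    exact ⟨m, IsFractionRing.injective R K (by simpa using hm)⟩

namespace WittVector

local notation "𝕎" => WittVector p

variable {R : Type*} [CommRing R]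

theorem mem_range_map_iff {S : Type*} [CommRing S] (f : R →+* S) (x : 𝕎 S) :
    x ∈ Set.range (map f) ↔ ∀ n, x.coeff n ∈ Set.range f := by
  refine ⟨?_, fun h => ?_⟩
  · rintro ⟨y, rfl⟩ n
    exact ⟨y.coeff n, (map_coeff f y n).symm⟩
  · choose y hy using h
    exact ⟨mk p y, ext fun n => by rw [map_coeff, coeff_mk, hy]⟩

theorem eq_of_forall_truncate_eq {x y : 𝕎 R} (h : ∀ n, truncate n x = truncate n y) :
    x = y := by
  ext i
  simpa using congrArg (TruncatedWittVector.coeff (Fin.last i)) (h (i + 1))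

theorem iterate_verschiebung_mem_ker_truncate (n : ℕ) (x : 𝕎 R) :
    verschiebung^[n] x ∈ RingHom.ker (truncate (p := p) (R := R) n) :=
  (mem_ker_truncate n _).2 fun _ => iterate_verschiebung_coeff_eq_zero x

theorem exists_forall_truncate_eq (s : ℕ → 𝕎 R)
    (hs : ∀ n, truncate n (s (n + 1)) = truncate n (s n)) :
    ∃ x, ∀ n, truncate n x = truncate n (s n) := by
  have stable : ∀ n m, n ≤ m → truncate n (s m) = truncate n (s n) := by
    intro n m hnm
    induction m, hnm using Nat.le_induction with
    | base => rfl
    | succ m hnm ih =>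
      rw [← TruncatedWittVector.truncate_wittVector_truncate hnm, hs,
        TruncatedWittVector.truncate_wittVector_truncate, ih]
  refine ⟨mk p fun i => (s (i + 1)).coeff i, fun n => TruncatedWittVector.ext fun i => ?_⟩
  have := congrArg (TruncatedWittVector.coeff (Fin.last i)) (stable (i + 1) n i.2)
  simpa using this.symm

section CharP

variable [CharP R p]

theorem frobenius_eq_self_iff {x : 𝕎 R} : frobenius x = x ↔ ∀ n, x.coeff n ^ p = x.coeff n := by
  simp only [WittVector.ext_iff, coeff_frobenius_charP]

theorem frobenius_eq_self_iff_mem_range_map [IsDomain R] {x : 𝕎 R} :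
    frobenius x = x ↔ x ∈ Set.range (map (ZMod.castHom (dvd_refl p) R)) := by
  simp only [frobenius_eq_self_iff, mem_range_map_iff, ZMod.mem_range_castHom_iff_pow_eq_self]

theorem truncate_frobenius_congr {n : ℕ} {x y : 𝕎 R} (h : truncate n x = truncate n y) :
    truncate n (frobenius x) = truncate n (frobenius y) := by
  ext i
  have := congrArg (TruncatedWittVector.coeff i) h
  simp only [coeff_truncate, coeff_frobenius_charP] at this ⊢
  rw [this]

theorem exists_truncate_succ_frobenius_sub_self_eq (hAS : ∀ c : R, ∃ a : R, a ^ p - a = c)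
    {n : ℕ} {x b : 𝕎 R} (hx : truncate n (frobenius x - x) = truncate n b) :
    ∃ x', truncate n x' = truncate n x ∧
      truncate (n + 1) (frobenius x' - x') = truncate (n + 1) b := by
  obtain ⟨z, hz⟩ : ∃ z, frobenius x - x - b = verschiebung^[n] z :=
    ⟨_, eq_iterate_verschiebung ((mem_ker_truncate n _).1 ((RingHom.sub_mem_ker_iff _).2 hx))⟩
  obtain ⟨a, ha⟩ := hAS (-z.coeff 0)
  set y := verschiebung^[n] (teichmuller p a)
  have hy : truncate n y = 0 := iterate_verschiebung_mem_ker_truncate n _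
  refine ⟨x + y, by rw [map_add, hy, add_zero], ?_⟩
  have herr : frobenius (x + y) - (x + y) - b =
      verschiebung^[n] (z + (frobenius (teichmuller p a) - teichmuller p a)) := by
    rw [iterate_map_add, iterate_map_sub, ← hz, map_add,
      ← verschiebung_frobenius_comm.iterate_left n]
    abel
  rw [← RingHom.sub_mem_ker_iff, herr, mem_ker_truncate]
  intro i hi
  rcases Nat.lt_succ_iff_lt_or_eq.1 hi with hi | rfl
  · exact iterate_verschiebung_coeff_eq_zero _ hi
  · have hlead := iterate_verschiebung_coeff
      (z + (frobenius (teichmuller p a) - teichmuller p a)) i 0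
    rw [zero_add] at hlead
    rw [hlead, ← constantCoeff_apply, map_add, map_sub]
    simp [coeff_frobenius_charP, ha]

theorem frobenius_sub_self_surjective (hAS : ∀ c : R, ∃ a : R, a ^ p - a = c) :
    Function.Surjective fun x : 𝕎 R => frobenius x - x := by
  intro b
  let Sol (n : ℕ) := {x : 𝕎 R // truncate n (frobenius x - x) = truncate n b}
  have step (n : ℕ) (x : Sol n) : ∃ x' : Sol (n + 1), truncate n x'.1 = truncate n x.1 :=
    let ⟨x', hx', hsol⟩ := exists_truncate_succ_frobenius_sub_self_eq hAS x.2
    ⟨⟨x', hsol⟩, hx'⟩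
  choose next hnext using step
  let s (n : ℕ) : Sol n := Nat.rec ⟨0, TruncatedWittVector.ext fun i => i.elim0⟩ next n
  obtain ⟨x, hx⟩ := exists_forall_truncate_eq (fun n => (s n).1) fun n => hnext n (s n)
  refine ⟨x, eq_of_forall_truncate_eq fun n => ?_⟩
  rw [map_sub, truncate_frobenius_congr (hx n), hx n, ← map_sub, (s n).2]

end CharP

end WittVector

theorem wittVector_frobenius_sub_id_surjective_kernel_general
    (p : ℕ) [Fact p.Prime] {J : Type*} (R : J → Type*)
    [∀ j, CommRing (R j)] [∀ j, IsDomain (R j)] [∀ j, CharP (R j) p]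
    [∀ j, IsIntegrallyClosed (R j)] [∀ j, IsAlgClosed (FractionRing (R j))] :
    Function.Surjective
      (fun (x : ∀ j, WittVector p (R j)) (j : J) =>
        WittVector.frobenius (x j) - x j) ∧
      {x : ∀ j, WittVector p (R j) |
          (fun j => WittVector.frobenius (x j) - x j) = 0} =
        Set.range
          (Pi.ringHom fun j =>
            ((WittVector.map (ZMod.castHom (dvd_refl p) (R j))).comp
                (WittVector.equiv p).symm.toRingHom).comp
              (Pi.evalRingHom (fun _ : J => ℤ_[p]) j)) := by
  refine ⟨fun b => ?_, ?_⟩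
  · have hAS (j : J) (c : R j) : ∃ a, a ^ p - a = c :=
      IsIntegrallyClosed.exists_pow_sub_self_eq (Fact.out : p.Prime).one_lt c
    choose x hx using fun j => frobenius_sub_self_surjective (hAS j) (b j)
    exact ⟨x, funext hx⟩
  · have hrange (j : J) :
        Set.range ((WittVector.map (ZMod.castHom (dvd_refl p) (R j))).comp
          (WittVector.equiv p).symm.toRingHom) =
        Set.range (WittVector.map (ZMod.castHom (dvd_refl p) (R j))) := by
      rw [RingHom.coe_comp]
      exact (WittVector.equiv p).symm.surjective.range_comp _
    change _ = Set.range (Pi.map fun j (z : ℤ_[p]) =>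
      ((WittVector.map (ZMod.castHom (dvd_refl p) (R j))).comp
        (WittVector.equiv p).symm.toRingHom) z)
    ext x
    simp only [Set.range_piMap, hrange, Set.mem_ofPred_eq, funext_iff, Pi.zero_apply, sub_eq_zero,
      frobenius_eq_self_iff_mem_range_map, Set.mem_pi, Set.mem_univ, true_implies]

/-- Let `(R j)` be a family of perfect characteristic-`p` integral domains, each
integrally closed with algebraically closed fraction field.  Then `F - id` is surjective
on `∏ 𝕎(R j)` (componentwise Witt vector Frobenius), and its kernel is the image of the
canonical ring homomorphism `∏ ℤ_p → ∏ 𝕎(R j)` coming from `ℤ_p ≅ 𝕎(𝔽_p) → 𝕎(R j)`. -/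
theorem wittVector_frobenius_sub_id_surjective_kernel
    (p : ℕ) [Fact p.Prime] {J : Type*} (R : J → Type*)
    [∀ j, CommRing (R j)] [∀ j, IsDomain (R j)] [∀ j, CharP (R j) p]
    (hperf : ∀ j, Function.Bijective (fun x : R j => x ^ p))
    [∀ j, IsIntegrallyClosed (R j)] [∀ j, IsAlgClosed (FractionRing (R j))] :
    Function.Surjective
      (fun (x : ∀ j, WittVector p (R j)) (j : J) =>
        WittVector.frobenius (x j) - x j) ∧
      {x : ∀ j, WittVector p (R j) |
          (fun j => WittVector.frobenius (x j) - x j) = 0} =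
        Set.range
          (Pi.ringHom fun j =>
            ((WittVector.map (ZMod.castHom (dvd_refl p) (R j))).comp
                (WittVector.equiv p).symm.toRingHom).comp
              (Pi.evalRingHom (fun _ : J => ℤ_[p]) j)) :=
  wittVector_frobenius_sub_id_surjective_kernel_general p R
end

section
/- Let A be a commutative ring and B a commutative A-algebra which is finitely generated and projective as an A-module. Let t : B → A be an A-linear map such that the A-bilinear form B × B → A, (x, y) ↦ t(x·y), is a perfect pairing. Let E₁ and E₂ be finitely generated projective B-modules and let b : E₁ × E₂ → B be a perfect B-bilinear pairing. Then the A-bilinear map E₁ × E₂ → A, (x, y) ↦ t(b(x, y)), is a perfect pairing of A-modules, where E₁ and E₂ are regarded as A-modules by restriction of scalars. -/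
def traceForm {A B E₁ E₂ : Type*} [CommRing A] [CommRing B] [Algebra A B]
    [AddCommGroup E₁] [Module A E₁] [Module B E₁] [IsScalarTower A B E₁]
    [AddCommGroup E₂] [Module A E₂] [Module B E₂] [IsScalarTower A B E₂]
    (t : B →ₗ[A] A) (b : E₁ →ₗ[B] E₂ →ₗ[B] B) : E₁ →ₗ[A] E₂ →ₗ[A] A where
  toFun x := t ∘ₗ ((b x).restrictScalars A)
  map_add' x y := by ext z; simp
  map_smul' a x := by
    ext z
    simp only [LinearMap.coe_comp, LinearMap.coe_restrictScalars, Function.comp_apply,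
      RingHom.id_apply, LinearMap.smul_apply]
    rw [← IsScalarTower.algebraMap_smul B a x, map_smul, LinearMap.smul_apply,
      algebraMap_smul, map_smul]

lemma comp_t_bijective {A B : Type*} [CommRing A] [CommRing B] [Algebra A B]
    (t : B →ₗ[A] A) (ht : Function.Bijective (traceForm t (LinearMap.mul B B)))
    (M : Type*) [AddCommGroup M] [Module A M] [Module B M] [IsScalarTower A B M] :
    Function.Bijective (fun f : M →ₗ[B] B => t ∘ₗ f.restrictScalars A) := by
  set e := LinearEquiv.ofBijective (traceForm t (LinearMap.mul B B)) ht with he_def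
  have he : ∀ x y : B, e x y = t (x * y) := fun x y => rfl
  have hinj : ∀ x x' : B, (∀ y, t (x * y) = t (x' * y)) → x = x' := by
    intro x x' h
    apply e.injective
    ext y
    rw [he, he]
    exact h y
  constructor
  · intro f f' hff
    have hpt : ∀ m, t (f m) = t (f' m) := fun m => DFunLike.congr_fun hff m
    ext m
    apply hinj
    intro y
    have h := hpt (y • m)
    rwa [f.map_smul, f'.map_smul, smul_eq_mul, smul_eq_mul, mul_comm y (f m),
      mul_comm y (f' m)] at h
  · intro g
    set β : M → B := fun m =>
      e.symm ((g.comp ((LinearMap.toSpanSingleton B M m).restrictScalars A))) with hβ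
    have heβ : ∀ m y, t (β m * y) = g (y • m) := by
      intro m y
      have h : e (β m) y = g (y • m) := by
        rw [hβ]
        simp only [LinearEquiv.apply_symm_apply]
        rfl
      rwa [he] at h
    have hadd : ∀ m m', β (m + m') = β m + β m' := by
      intro m m'
      apply hinj
      intro y
      rw [heβ, add_mul, map_add, heβ, heβ, ← map_add g, ← smul_add]
    have hsmul : ∀ (c : B) (m : M), β (c • m) = c • β m := by
      intro c m
      apply hinj
      intro y
      have h1 : (c • β m) * y = β m * (y * c) := by rw [smul_eq_mul]; ring
      rw [heβ, h1, heβ, smul_smul]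
    refine ⟨{ toFun := β, map_add' := hadd, map_smul' := hsmul }, ?_⟩
    ext m
    simp only [LinearMap.coe_comp, LinearMap.coe_restrictScalars, Function.comp_apply,
      LinearMap.coe_mk, AddHom.coe_mk]
    rw [← mul_one (β m), heβ, one_smul]

/-- Let `B` be a commutative `A`-algebra, finitely generated projective as an
`A`-module, and `t : B → A` an `A`-linear map such that `(x, y) ↦ t (x * y)` is a
perfect pairing.  If `b` is a perfect `B`-bilinear pairing between finitely generated
projective `B`-modules `E₁` and `E₂`, then `(x, y) ↦ t (b x y)` is a perfect pairing of
`A`-modules. -/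
theorem perfect_pairing_of_trace
    {A B E₁ E₂ : Type*} [CommRing A] [CommRing B] [Algebra A B]
    [Module.Finite A B] [Module.Projective A B]
    [AddCommGroup E₁] [Module A E₁] [Module B E₁] [IsScalarTower A B E₁]
    [AddCommGroup E₂] [Module A E₂] [Module B E₂] [IsScalarTower A B E₂]
    [Module.Finite B E₁] [Module.Projective B E₁]
    [Module.Finite B E₂] [Module.Projective B E₂]
    (t : B →ₗ[A] A)
    (ht₁ : Function.Bijective (traceForm t (LinearMap.mul B B)))
    (ht₂ : Function.Bijective (traceForm t (LinearMap.mul B B)).flip)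
    (b : E₁ →ₗ[B] E₂ →ₗ[B] B)
    (hb₁ : Function.Bijective b) (hb₂ : Function.Bijective b.flip) :
    Function.Bijective (traceForm t b) ∧ Function.Bijective (traceForm t b).flip := by
  constructor
  · have h := (comp_t_bijective t ht₁ E₂).comp hb₁
    have heq : ⇑(traceForm t b) =
        (fun f : E₂ →ₗ[B] B => t ∘ₗ f.restrictScalars A) ∘ ⇑b := rfl
    rwa [heq]
  · have h := (comp_t_bijective t ht₁ E₁).comp hb₂
    have heq : ⇑(traceForm t b).flip =
        (fun f : E₁ →ₗ[B] B => t ∘ₗ f.restrictScalars A) ∘ ⇑b.flip := by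
      funext y; ext x; rfl
    rwa [heq]
end
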